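/- For every positive integer ℓ, the quantity Σ_{k=1}^{ℓ} c(ℓ,k)/(4^k · ℓ!) = Γ(ℓ + 1/4)/(Γ(ℓ+1) Γ(1/4)) satisfies 1/(4(ℓ+1)^{3/4}) < Γ(ℓ + 1/4)/(Γ(ℓ+1) Γ(1/4)) < 3/(5(ℓ+1)^{3/4}). -/

import Mathlib

/-!
Splitting a permutation of `Fin (n + 1)` as a transposition `swap 0 p` times a permutation
fixing `0` shows that `p = 0` adds a fixed point while `p ≠ 0` merges `0` into an existing
cycle; hence `∑ σ, x ^ (cycles of σ) = x (x + 1) ⋯ (x + n - 1)`, and at `x = 1/4` this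
rising factorial is `Γ(n + 1/4) / Γ(1/4)`.

Both bounds come from the log-convexity of `Γ` in the form `Γ(x + s) ≤ x ^ s Γ(x)` for
`0 ≤ s ≤ 1`: applied at `x + 1/4` it bounds `Γ(x + 1)` from above, applied at `x` it bounds
`Γ(x + 1/4)` from above, and applied at `1` and `5/4` it gives `8√π/5 ≤ Γ(1/4) ≤ 4`.
-/

/-- Number of cycles of a permutation, counting fixed points as cycles of length 1. -/
def numCycles {n : ℕ} (σ : Equiv.Perm (Fin n)) : ℕ :=
  Multiset.card σ.cycleType + (n - σ.cycleType.sum)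

/-- The unsigned Stirling number of the first kind: the number of permutations of
`ℓ` letters with exactly `k` cycles. -/
noncomputable def stirlingC (ℓ k : ℕ) : ℕ :=
  Nat.card {σ : Equiv.Perm (Fin ℓ) // numCycles σ = k}

/-- The signed Stirling number of the first kind. -/
noncomputable def stirlingS (ℓ k : ℕ) : ℤ :=
  (-1) ^ (ℓ - k) * stirlingC ℓ k

open Equiv Finset

namespace Equiv.Perm

variable {α : Type*} [Fintype α] [DecidableEq α]

def cycleCount (σ : Perm α) : ℕ :=
  Multiset.card σ.partition.parts

theorem cycleCount_add_card_support (σ : Perm α) :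
    σ.cycleCount + #σ.support = Multiset.card σ.cycleType + Fintype.card α := by
  have := σ.support.card_le_univ
  simp only [cycleCount, parts_partition, Multiset.card_add, Multiset.card_replicate]
  omega

theorem Disjoint.cycleCount_mul_add_card_support {σ τ : Perm α} (h : σ.Disjoint τ) :
    (σ * τ).cycleCount + #σ.support = τ.cycleCount + Multiset.card σ.cycleType := by
  have hστ := cycleCount_add_card_support (σ * τ)
  have hτ := cycleCount_add_card_support τ
  rw [h.cycleType_mul, h.card_support_mul, Multiset.card_add] at hστ
  omega

theorem IsCycle.card_cycleType_swap_mul_add_card_support {c : Perm α} (hc : c.IsCycle) {x : α}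
    (hx : c x ≠ x) :
    Multiset.card (swap x (c x) * c).cycleType + #c.support
      = #(swap x (c x) * c).support + 2 := by
  by_cases hccx : c (c x) = x
  · obtain ⟨y, hy⟩ : ∃ y, c x = y := ⟨_, rfl⟩
    have hc2 := hc.eq_swap_of_apply_apply_eq_self hx hccx
    rw [hy] at hc2 hx ⊢
    subst hc2
    simp [card_support_swap hx.symm]
  · have hx' : x ∈ c.support := mem_support.mpr hx
    rw [card_cycleType_eq_one.mpr (hc.swap_mul hx hccx), support_swap_mul_eq c x hccx,
      card_sdiff_of_subset (singleton_subset_iff.mpr hx'), card_singleton]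
    have := card_pos.mpr ⟨x, hx'⟩
    omega

theorem cycleCount_swap_mul {g : Perm α} {x : α} (hx : g x ≠ x) :
    (swap x (g x) * g).cycleCount = g.cycleCount + 1 := by
  set c := g.cycleOf x
  set d := g * c⁻¹
  have hc : c.IsCycle := isCycle_cycleOf g hx
  have hcx : c x = g x := cycleOf_apply_self g x
  have hcd : c.Disjoint d :=
    (disjoint_mul_inv_of_mem_cycleFactorsFinset
      (cycleOf_mem_cycleFactorsFinset_iff.mpr (mem_support.mpr hx))).symm
  have hg : c * d = g := by rw [hcd.commute.eq, inv_mul_cancel_right]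
  have hcd' : (swap x (c x) * c).Disjoint d :=
    hcd.mono (fun y hy => (mem_support_swap_mul_imp_mem_support_ne hy).1) subset_rfl
  -- only the cycle `c` through `x` changes: `x` is split off it as a new fixed point
  have hsplit : swap x (g x) * g = swap x (c x) * c * d := by rw [hcx, mul_assoc, hg]
  have h₁ := hcd.cycleCount_mul_add_card_support
  have h₂ := hcd'.cycleCount_mul_add_card_support
  have h₃ := hc.card_cycleType_swap_mul_add_card_support (hcx ▸ hx)
  rw [hg, hc.cycleType, Multiset.card_singleton] at h₁
  rw [hsplit]
  omega

theorem cycleCount_swap_mul_of_apply_eq_self {f : Perm α} {a b : α} (ha : f a = a)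
    (hab : a ≠ b) : (swap a b * f).cycleCount + 1 = f.cycleCount := by
  have hb : (swap a b * f) a = b := by simp [ha]
  have := cycleCount_swap_mul (g := swap a b * f) (x := a) (by rw [hb]; exact hab.symm)
  rwa [hb, ← mul_assoc, swap_mul_self, one_mul, eq_comm] at this

theorem cycleCount_extendDomain {β : Type*} [Fintype β] [DecidableEq β] {p : β → Prop}
    [DecidablePred p] (f : α ≃ Subtype p) (σ : Perm α) :
    (σ.extendDomain f).cycleCount + Fintype.card α = σ.cycleCount + Fintype.card β := by
  have h₁ := cycleCount_add_card_support (σ.extendDomain f)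
  have h₂ := cycleCount_add_card_support σ
  rw [cycleType_extendDomain, card_support_extend_domain] at h₁
  omega

theorem decomposeFin_symm_zero {n : ℕ} (e : Perm (Fin n)) :
    decomposeFin.symm (0, e) = e.extendDomain (finSuccAboveEquiv 0) := by
  ext i
  refine Fin.cases ?_ (fun i => ?_) i
  · rw [decomposeFin_symm_apply_zero, extendDomain_apply_not_subtype _ _ (by simp)]
  · have h := extendDomain_apply_image e (finSuccAboveEquiv 0) i
    simp only [finSuccAboveEquiv_apply, Fin.succAbove_zero] at h
    simp [decomposeFin_symm_apply_succ, h]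

theorem decomposeFin_symm_eq_swap_mul {n : ℕ} (p : Fin (n + 1)) (e : Perm (Fin n)) :
    decomposeFin.symm (p, e) = swap 0 p * decomposeFin.symm (0, e) := by
  ext i
  refine Fin.cases ?_ (fun i => ?_) i <;>
    simp [decomposeFin_symm_apply_zero, decomposeFin_symm_apply_succ]

theorem cycleCount_decomposeFin_symm_zero {n : ℕ} (e : Perm (Fin n)) :
    (decomposeFin.symm (0, e)).cycleCount = e.cycleCount + 1 := by
  have := cycleCount_extendDomain (finSuccAboveEquiv (0 : Fin (n + 1))) e
  rw [Fintype.card_fin, Fintype.card_fin] at this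
  rw [decomposeFin_symm_zero]
  omega

theorem cycleCount_decomposeFin_symm_of_ne_zero {n : ℕ} {p : Fin (n + 1)} (hp : p ≠ 0)
    (e : Perm (Fin n)) : (decomposeFin.symm (p, e)).cycleCount = e.cycleCount := by
  have := cycleCount_swap_mul_of_apply_eq_self (f := decomposeFin.symm (0, e))
    (decomposeFin_symm_apply_zero 0 e) hp.symm
  rw [← decomposeFin_symm_eq_swap_mul, cycleCount_decomposeFin_symm_zero] at this
  omega

theorem sum_pow_cycleCount {R : Type*} [CommSemiring R] (x : R) (n : ℕ) :
    ∑ σ : Perm (Fin n), x ^ σ.cycleCount = (ascPochhammer R n).eval x := by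
  induction n with
  | zero => simp [cycleCount, parts_partition]
  | succ n ih =>
    rw [← decomposeFin.symm.sum_comp, Fintype.sum_prod_type, Fin.sum_univ_succ,
      ascPochhammer_succ_eval, ← ih]
    simp only [cycleCount_decomposeFin_symm_zero, pow_succ,
      cycleCount_decomposeFin_symm_of_ne_zero (Fin.succ_ne_zero _), sum_const, card_univ,
      Fintype.card_fin, ← Finset.sum_mul, nsmul_eq_mul]
    ring

end Equiv.Perm

theorem Nat.Partition.card_parts_le {n : ℕ} (p : n.Partition) : Multiset.card p.parts ≤ n := by
  simpa [← p.parts_sum] using Multiset.card_nsmul_le_sum (a := 1) fun _ hi => p.parts_pos hi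

theorem Nat.Partition.card_parts_pos {n : ℕ} (p : n.Partition) (hn : 0 < n) :
    0 < Multiset.card p.parts := by
  rw [Multiset.card_pos]
  rintro h
  simp [← p.parts_sum, h] at hn

theorem numCycles_eq_cycleCount {n : ℕ} (σ : Perm (Fin n)) : numCycles σ = σ.cycleCount := by
  simp [numCycles, Perm.cycleCount, Perm.parts_partition, Perm.sum_cycleType]

theorem sum_stirlingC_mul_pow {R : Type*} [CommSemiring R] (x : R) {n : ℕ} (hn : 0 < n) :
    ∑ k ∈ Icc 1 n, (stirlingC n k : R) * x ^ k = (ascPochhammer R n).eval x := by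
  have hmaps : ∀ σ ∈ (univ : Finset (Perm (Fin n))), numCycles σ ∈ Icc 1 n := fun σ _ => by
    rw [mem_Icc, numCycles_eq_cycleCount]
    exact ⟨σ.partition.card_parts_pos (by simpa using hn),
      σ.partition.card_parts_le.trans_eq (Fintype.card_fin n)⟩
  rw [← Perm.sum_pow_cycleCount, ← sum_fiberwise_of_maps_to hmaps]
  refine sum_congr rfl fun k _ => ?_
  rw [stirlingC, Nat.card_eq_fintype_card, Fintype.card_subtype, ← nsmul_eq_mul, ← sum_const]
  refine sum_congr rfl fun σ hσ => ?_
  rw [← numCycles_eq_cycleCount, (mem_filter.mp hσ).2]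

namespace Real

theorem Gamma_add_nat_eq_mul_ascPochhammer {s : ℝ} (hs : ∀ k : ℕ, s ≠ -k) (n : ℕ) :
    Gamma (s + n) = Gamma s * (ascPochhammer ℝ n).eval s := by
  induction n with
  | zero => simp
  | succ n ih =>
    have hsn : s + n ≠ 0 := fun h => hs n (by linarith)
    rw [Nat.cast_succ, ← add_assoc, Gamma_add_one hsn, ih, ascPochhammer_succ_eval]
    ring

theorem Gamma_add_le_rpow_mul_Gamma {x s : ℝ} (hx : 0 < x) (hs₀ : 0 ≤ s) (hs₁ : s ≤ 1) :
    Gamma (x + s) ≤ x ^ s * Gamma x := by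
  rcases hs₀.eq_or_lt with rfl | hs₀
  · simp
  rcases hs₁.eq_or_lt with rfl | hs₁
  · rw [rpow_one, Gamma_add_one hx.ne']
  have h := Gamma_mul_add_mul_le_rpow_Gamma_mul_rpow_Gamma hx (by linarith : 0 < x + 1)
    (by linarith : 0 < 1 - s) hs₀ (by ring)
  rw [Gamma_add_one hx.ne', mul_rpow hx.le (Gamma_pos_of_pos hx).le] at h
  calc Gamma (x + s) = Gamma ((1 - s) * x + s * (x + 1)) := by ring_nf
    _ ≤ Gamma x ^ (1 - s) * (x ^ s * Gamma x ^ s) := h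
    _ = x ^ s * Gamma x := by
      rw [mul_left_comm, ← rpow_add (Gamma_pos_of_pos hx), sub_add_cancel, rpow_one]

theorem Gamma_one_div_four_le : Gamma (1 / 4) ≤ 4 := by
  have h := Gamma_add_le_rpow_mul_Gamma one_pos (by norm_num : (0 : ℝ) ≤ 1 / 4) (by norm_num)
  rw [one_rpow, Gamma_one, one_mul, add_comm, Gamma_add_one (by norm_num)] at h
  linarith

theorem eight_div_five_mul_sqrt_pi_le_Gamma_one_div_four : 8 / 5 * √π ≤ Gamma (1 / 4) := by
  have h := Gamma_add_le_rpow_mul_Gamma (by norm_num : (0 : ℝ) < 5 / 4)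
    (by norm_num : (0 : ℝ) ≤ 1 / 4) (by norm_num)
  have h₁ : (5 / 4 : ℝ) ^ (1 / 4 : ℝ) ≤ 5 / 4 :=
    rpow_le_self_of_one_le (by norm_num) (by norm_num)
  have h₂ : Gamma (5 / 4 + 1 / 4) = √π / 2 := by
    rw [show (5 / 4 + 1 / 4 : ℝ) = 1 / 2 + 1 by norm_num, Gamma_add_one (by norm_num),
      Gamma_one_half_eq]
    ring
  have h₃ : Gamma (5 / 4) = Gamma (1 / 4) / 4 := by
    rw [show (5 / 4 : ℝ) = 1 / 4 + 1 by norm_num, Gamma_add_one (by norm_num)]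
    ring
  rw [h₂, h₃] at h
  nlinarith [Gamma_pos_of_pos (by norm_num : (0 : ℝ) < 1 / 4)]

theorem five_mul_two_rpow_lt_three_mul_Gamma_one_div_four :
    5 * (2 : ℝ) ^ (3 / 4 : ℝ) < 3 * Gamma (1 / 4) := by
  have h₁ : (2 : ℝ) ^ (3 / 4 : ℝ) < 1.69 := by
    refine lt_of_pow_lt_pow_left₀ 4 (by norm_num) ?_
    rw [← rpow_natCast, ← rpow_mul (by norm_num)]
    norm_num
  have h₂ : (1.77 : ℝ) < √π := by
    rw [lt_sqrt (by norm_num)]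
    linarith [pi_gt_d2]
  linarith [eight_div_five_mul_sqrt_pi_le_Gamma_one_div_four]

theorem one_div_four_mul_rpow_lt_Gamma_div {x : ℝ} (hx : 0 ≤ x) :
    1 / (4 * (x + 1) ^ (3 / 4 : ℝ)) < Gamma (x + 1 / 4) / (Gamma (x + 1) * Gamma (1 / 4)) := by
  have hx' : 0 < x + 1 / 4 := by linarith
  have hΓ := Gamma_pos_of_pos hx'
  have h₁ : Gamma (x + 1) ≤ (x + 1 / 4) ^ (3 / 4 : ℝ) * Gamma (x + 1 / 4) := by
    have := Gamma_add_le_rpow_mul_Gamma hx' (by norm_num : (0 : ℝ) ≤ 3 / 4) (by norm_num)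
    rwa [show x + 1 / 4 + 3 / 4 = x + 1 by ring] at this
  have h₂ : (x + 1 / 4) ^ (3 / 4 : ℝ) < (x + 1) ^ (3 / 4 : ℝ) :=
    rpow_lt_rpow hx'.le (by linarith) (by norm_num)
  rw [div_lt_div_iff₀ (by positivity)
    (mul_pos (Gamma_pos_of_pos (by linarith)) (Gamma_pos_of_pos (by norm_num)))]
  calc 1 * (Gamma (x + 1) * Gamma (1 / 4))
      ≤ (x + 1 / 4) ^ (3 / 4 : ℝ) * Gamma (x + 1 / 4) * 4 := by
        rw [one_mul]
        exact mul_le_mul h₁ Gamma_one_div_four_le (Gamma_pos_of_pos (by norm_num)).le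
          (by positivity)
    _ < Gamma (x + 1 / 4) * (4 * (x + 1) ^ (3 / 4 : ℝ)) := by nlinarith

theorem Gamma_div_lt_three_div_five_mul_rpow {x : ℝ} (hx : 1 ≤ x) :
    Gamma (x + 1 / 4) / (Gamma (x + 1) * Gamma (1 / 4)) < 3 / (5 * (x + 1) ^ (3 / 4 : ℝ)) := by
  have hx₀ : 0 < x := by linarith
  have hΓ := Gamma_pos_of_pos hx₀
  have h₁ : Gamma (x + 1 / 4) ≤ x ^ (1 / 4 : ℝ) * Gamma x :=
    Gamma_add_le_rpow_mul_Gamma hx₀ (by norm_num) (by norm_num)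
  have h₂ : x ^ (1 / 4 : ℝ) * (x + 1) ^ (3 / 4 : ℝ) ≤ 2 ^ (3 / 4 : ℝ) * x :=
    calc x ^ (1 / 4 : ℝ) * (x + 1) ^ (3 / 4 : ℝ)
        ≤ x ^ (1 / 4 : ℝ) * (2 * x) ^ (3 / 4 : ℝ) := by
          gcongr
          linarith
      _ = 2 ^ (3 / 4 : ℝ) * x := by
          rw [mul_rpow zero_le_two hx₀.le, mul_left_comm, ← rpow_add hx₀]
          norm_num
  have h₃ := five_mul_two_rpow_lt_three_mul_Gamma_one_div_four
  rw [Gamma_add_one hx₀.ne', div_lt_div_iff₀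
    (mul_pos (mul_pos hx₀ hΓ) (Gamma_pos_of_pos (by norm_num))) (by positivity)]
  calc Gamma (x + 1 / 4) * (5 * (x + 1) ^ (3 / 4 : ℝ))
      ≤ x ^ (1 / 4 : ℝ) * Gamma x * (5 * (x + 1) ^ (3 / 4 : ℝ)) := by gcongr
    _ ≤ 5 * 2 ^ (3 / 4 : ℝ) * (x * Gamma x) := by nlinarith
    _ < 3 * (x * Gamma x * Gamma (1 / 4)) := by nlinarith [mul_pos hx₀ hΓ]

end Real

theorem sum_stirlingC_mul_pow_div_factorial {s : ℝ} (hs : ∀ k : ℕ, s ≠ -k) {n : ℕ}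
    (hn : 0 < n) :
    ∑ k ∈ Icc 1 n, (stirlingC n k : ℝ) * s ^ k / n.factorial
      = Real.Gamma (n + s) / (Real.Gamma (n + 1) * Real.Gamma s) := by
  rw [← sum_div, sum_stirlingC_mul_pow s hn, Real.Gamma_nat_eq_factorial, add_comm (n : ℝ),
    Real.Gamma_add_nat_eq_mul_ascPochhammer hs, mul_comm (n.factorial : ℝ),
    mul_div_mul_left _ _ (Real.Gamma_ne_zero hs)]

theorem stmt_13 (ℓ : ℕ) (hℓ : 0 < ℓ) :
    ∑ k ∈ Finset.Icc 1 ℓ, (stirlingC ℓ k : ℝ) / (4 ^ k * Nat.factorial ℓ)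
        = Real.Gamma ((ℓ : ℝ) + 1 / 4) /
            (Real.Gamma ((ℓ : ℝ) + 1) * Real.Gamma (1 / 4)) ∧
    1 / (4 * ((ℓ : ℝ) + 1) ^ ((3 : ℝ) / 4))
        < Real.Gamma ((ℓ : ℝ) + 1 / 4) /
            (Real.Gamma ((ℓ : ℝ) + 1) * Real.Gamma (1 / 4)) ∧
    Real.Gamma ((ℓ : ℝ) + 1 / 4) /
            (Real.Gamma ((ℓ : ℝ) + 1) * Real.Gamma (1 / 4))
        < 3 / (5 * ((ℓ : ℝ) + 1) ^ ((3 : ℝ) / 4)) := by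
  refine ⟨?_, Real.one_div_four_mul_rpow_lt_Gamma_div ℓ.cast_nonneg,
    Real.Gamma_div_lt_three_div_five_mul_rpow (by exact_mod_cast hℓ)⟩
  rw [← sum_stirlingC_mul_pow_div_factorial
    (fun k => ne_of_gt (by linarith [k.cast_nonneg (α := ℝ)])) hℓ]
  refine sum_congr rfl fun k _ => ?_
  rw [one_div_pow, mul_one_div, div_div]
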